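/- arXiv:2104.05640 — 2 statements merged into one kernel-verified Lean document; each statement's English description precedes it below -/
import Mathlib

section
/- Let ω = (α, α', 1) ∈ Y, with (p_n/q_n) the convergents of α and (p'_n/q'_n) the convergents of α'. Define h(θ) = −Σ_{n≥1} e^{−q_n} cos 2π(q_n θ₁ − p_n θ₃) − Σ_{n≥1} e^{−q'_n} cos 2π(q'_n θ₂ − p'_n θ₃). Then the Hamiltonian flow Φ^t_H of H(θ,r) = ⟨r,ω⟩ + h(θ) on 𝕋³ × ℝ³ exhibits diffusion at all times. -/
/-!
STATEMENT 2 (Theorem 1 of the paper):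
Let ω = (α, α', 1) ∈ Y, with (p_n/q_n) the convergents of α and (p'_n/q'_n)
the convergents of α'.  Define
h(θ) = −Σ_{n≥1} e^{−q_n} cos 2π(q_n θ₁ − p_n θ₃) − Σ_{n≥1} e^{−q'_n} cos 2π(q'_n θ₂ − p'_n θ₃).
Then the Hamiltonian flow of H(θ,r) = ⟨r,ω⟩ + h(θ) on 𝕋³ × ℝ³ exhibits diffusion
at all times.

We work on the universal cover ℝ³ × ℝ³.  The convergents p_n/q_n of an irrational
number are taken from Mathlib's continued fraction expansion `GenContFract.of`.
-/

open Real Set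

noncomputable section

/-- Phase space (the universal cover of 𝕋³ × ℝ³). -/
abbrev PS3 : Type := (Fin 3 → ℝ) × (Fin 3 → ℝ)

/-- `Φ` is the flow of the Hamiltonian ODE θ̇ = ∂H/∂r, ṙ = −∂H/∂θ. -/
def IsHamFlow (H : PS3 → ℝ) (Φ : ℝ → PS3 → PS3) : Prop :=
  (∀ x, Φ 0 x = x) ∧
  (∀ (x : PS3) (t : ℝ) (j : Fin 3),
    HasDerivAt (fun s : ℝ => (Φ s x).1 j)
      (deriv (fun y : ℝ => H ((Φ t x).1, Function.update (Φ t x).2 j y)) ((Φ t x).2 j)) t) ∧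
  (∀ (x : PS3) (t : ℝ) (j : Fin 3),
    HasDerivAt (fun s : ℝ => (Φ s x).2 j)
      (-deriv (fun y : ℝ => H (Function.update (Φ t x).1 j y, (Φ t x).2)) ((Φ t x).1 j)) t)

/-- A subset of the cover invariant under θ ↦ θ + k, k ∈ ℤ³; such sets
correspond exactly to subsets of 𝕋³ × ℝ³. -/
def ThetaPeriodic (A : Set PS3) : Prop :=
  ∀ (k : Fin 3 → ℤ) (x : PS3), x ∈ A → ((fun j => x.1 j + (k j : ℝ)), x.2) ∈ A

/-- Diffusion at all times. -/
def DiffusesAtAllTimes (Φ : ℝ → PS3 → PS3) : Prop :=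
  ∀ A : Set PS3, IsOpen A → A.Nonempty → ThetaPeriodic A →
    ∀ R : ℝ, 0 ≤ R → ∃ T : ℝ, ∀ t : ℝ, T ≤ t →
      ENNReal.ofReal R < EMetric.diam ((fun x => (Φ t x).2) '' A)

/-- The denominator q_n of the n-th convergent of α. -/
def cfq (α : ℝ) (n : ℕ) : ℝ := (GenContFract.of α).dens n

/-- The numerator p_n of the n-th convergent of α. -/
def cfp (α : ℝ) (n : ℕ) : ℝ := (GenContFract.of α).nums n

/-- ω = (α, α', 1) belongs to the Yoccoz class Y: α, α' are irrational and the
denominators of their convergents satisfy e^{q_n} ≤ q'_n/4 and e^{q'_n} ≤ q_{n+1}/4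
for all n ≥ 1. -/
def MemY (α α' : ℝ) : Prop :=
  Irrational α ∧ Irrational α' ∧
    ∀ n : ℕ, 1 ≤ n →
      Real.exp (cfq α n) ≤ cfq α' n / 4 ∧ Real.exp (cfq α' n) ≤ cfq α (n + 1) / 4

/-- The perturbation h of formula (4) of the paper. -/
def hY (α α' : ℝ) (θ : Fin 3 → ℝ) : ℝ :=
  -(∑' n : ℕ, Real.exp (-cfq α (n + 1)) *
      Real.cos (2 * π * (cfq α (n + 1) * θ 0 - cfp α (n + 1) * θ 2)))
  - ∑' n : ℕ, Real.exp (-cfq α' (n + 1)) *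
      Real.cos (2 * π * (cfq α' (n + 1) * θ 1 - cfp α' (n + 1) * θ 2))

/-!
Along the flow the angles move linearly, `θ(t) = θ + t ω`, so the action `r₀` changes by an explicit
trigonometric series in `t`, and likewise `r₁` with `α'` in place of `α`. Its `n`-th term
is `A_n(t) sin(2π q_n θ₀ + …)` with amplitude `A_n(t) = 2 q_n e^{-q_n} sin(π ε_n t) / ε_n`, where
`ε_n = q_n α - p_n` has size about `1/q_{n+1}`. For `t ≤ q_{n+1}/2` the amplitude grows linearly,
`A_n(t) ≥ 4 q_n e^{-q_n} t`, while moving `θ₀` by `1/(2q_K)` changes every term with `n ≠ K` by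
`O(q_n² e^{-q_n})`, a summable amount.

Given a large `t`, let `M` be the last index with `2 e^{q_M} ≤ t`. The growth conditions defining
`Y` leave two cases: either `t ≤ q_{M+1}/2`, or `2 e^{q'_M} ≤ t ≤ q'_{M+1}/2`. In both, two initial
angles `1/(2q_M)` apart at which the `M`-th term has opposite signs end up with actions differing
by at least `16 q_M - O(1)`, and `q_M ≥ M` is as large as we like.
-/

lemma sq_le_eight_mul_exp_half {x : ℝ} (hx : 0 ≤ x) : x ^ 2 ≤ 8 * exp (x / 2) := by
  have := pow_div_factorial_le_exp (x := x / 2) (by positivity) 2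
  norm_num [Nat.factorial] at this
  linarith

lemma exp_neg_half_le_pow {x : ℝ} {n : ℕ} (h : n ≤ x) : exp (-x / 2) ≤ (2 / 3) ^ n := by
  have hexp : exp (-1 / 2) ≤ 2 / 3 := by
    rw [show (-1 / 2 : ℝ) = -(1 / 2) by ring, exp_neg, inv_le_comm₀ (exp_pos _) (by norm_num)]
    linarith [add_one_le_exp (1 / 2)]
  calc exp (-x / 2) ≤ exp (n * (-1 / 2)) := exp_le_exp.2 (by linarith)
    _ = exp (-1 / 2) ^ n := exp_nat_mul _ n
    _ ≤ (2 / 3) ^ n := by gcongr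

lemma two_mul_le_sin_mul_div {e t : ℝ} (he : e ≠ 0) (ht : 0 ≤ t) (h : |e| * t ≤ 1 / 2) :
    2 * t ≤ sin (π * e * t) / e := by
  have heven : sin (π * e * t) / e = sin (π * |e| * t) / |e| := by
    rcases abs_choice e with h | h <;> rw [h]
    rw [show π * -e * t = -(π * e * t) by ring, sin_neg, neg_div_neg_eq]
  have hpos := abs_pos.2 he
  have hjordan := mul_le_sin (x := π * |e| * t) (by positivity) (by nlinarith [pi_pos])
  rw [heven, le_div_iff₀ hpos]
  calc 2 * t * |e| = 2 / π * (π * |e| * t) := by field_simp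
    _ ≤ _ := hjordan

lemma abs_sin_mul_div_le (e t : ℝ) : |sin (π * e * t) / e| ≤ π * |t| := by
  rcases eq_or_ne e 0 with rfl | he
  · simp only [div_zero, abs_zero]
    positivity
  rw [abs_div, div_le_iff₀ (abs_pos.2 he)]
  calc |sin (π * e * t)| ≤ |π * e * t| := abs_sin_le_abs
    _ = π * |t| * |e| := by rw [abs_mul, abs_mul, abs_of_pos pi_pos]; ring

lemma exists_abs_sub_le_sin_eq_one {q : ℝ} (hq : 0 < q) (c y₀ : ℝ) :
    ∃ y, |y - y₀| ≤ (2 * q)⁻¹ ∧ sin (2 * π * q * y + c) = 1 := by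
  set a := (c - π / 2) / (2 * π)
  refine ⟨(round (q * y₀ + a) - a) / q, ?_, ?_⟩
  · have hsub : (round (q * y₀ + a) - a) / q - y₀ = -(q * y₀ + a - round (q * y₀ + a)) / q := by
      field_simp; ring
    calc |(round (q * y₀ + a) - a) / q - y₀| = |q * y₀ + a - round (q * y₀ + a)| / q := by
          rw [hsub, abs_div, abs_neg, abs_of_pos hq]
      _ ≤ 1 / 2 / q := by gcongr; exact abs_sub_round _
      _ = (2 * q)⁻¹ := by rw [div_div, one_div]
  · have hphase : 2 * π * q * ((round (q * y₀ + a) - a) / q) + c =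
        π / 2 + round (q * y₀ + a) * (2 * π) := by
      simp only [a]; field_simp; ring
    rw [hphase, sin_add_int_mul_two_pi, sin_pi_div_two]

lemma abs_tsum_sub_le {ι : Type*} [DecidableEq ι] {f g : ι → ℝ} (i : ι) (hg : Summable g)
    (hgi : 0 ≤ g i) (hfg : ∀ j ≠ i, |f j| ≤ g j) : |∑' j, f j - f i| ≤ ∑' j, g j := by
  have hbound : ∀ j, ‖(if j = i then 0 else f j)‖ ≤ g j := fun j ↦ by
    split_ifs with h
    · simpa [h] using hgi
    · exact hfg j h
  have hupd : Function.update f i 0 = fun j ↦ if j = i then 0 else f j := by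
    ext j; rw [Function.update_apply]
  rw [Summable.tsum_eq_add_tsum_ite' i (hupd ▸ hg.of_norm_bounded hbound), add_sub_cancel_left]
  exact tsum_of_norm_bounded hg.hasSum hbound

lemma exists_le_lt_succ_of_tendsto {α : Type*} [LinearOrder α] [NoMaxOrder α] {u : ℕ → α}
    (hu : Filter.Tendsto u Filter.atTop Filter.atTop) {N : ℕ} {t : α} (hN : u N ≤ t) :
    ∃ M, N ≤ M ∧ u M ≤ t ∧ t < u (M + 1) := by
  classical
  have hex : ∃ k, t < u (N + k) := by
    obtain ⟨m, hm⟩ := (hu.eventually_gt_atTop t).exists_forall_of_atTop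
    exact ⟨m, hm _ (Nat.le_add_left m N)⟩
  obtain ⟨k, hk⟩ : ∃ k, Nat.find hex = k + 1 := Nat.exists_eq_succ_of_ne_zero fun h ↦
    (Nat.find_spec hex).not_ge (by simpa [h] using hN)
  refine ⟨N + k, by omega, not_lt.1 (Nat.find_min hex (by omega)), ?_⟩
  simpa [hk, add_assoc] using Nat.find_spec hex

lemma sub_eq_sub_of_hasDerivAt {f g f' : ℝ → ℝ} (hf : ∀ s, HasDerivAt f (f' s) s)
    (hg : ∀ s, HasDerivAt g (f' s) s) (x y : ℝ) : f x - g x = f y - g y :=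
  is_const_of_deriv_eq_zero (fun s ↦ ((hf s).fun_sub (hg s)).differentiableAt)
    (fun s ↦ by simpa using ((hf s).fun_sub (hg s)).deriv) x y

lemma hasDerivAt_sum_update_mul {ι : Type*} [Fintype ι] [DecidableEq ι] (r ω : ι → ℝ) (j : ι)
    (y : ℝ) : HasDerivAt (fun y ↦ ∑ i, Function.update r j y i * ω i) (ω j) y := by
  have hcoord (i : ι) :
      HasDerivAt (fun y ↦ Function.update r j y i) ((Pi.single j 1 : ι → ℝ) i) y := by
    simpa using hasDerivAt_pi.1 (hasDerivAt_update r j y) i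
  exact (HasDerivAt.fun_sum fun i _ ↦ (hcoord i).mul_const (ω i)).congr_deriv
    (by simp [Pi.single_apply])

lemma hasDerivAt_tsum_mul_cos_add {c a d u : ℕ → ℝ} {φ : ℕ → ℝ → ℝ}
    (hφ : ∀ n y, HasDerivAt (φ n) (a n) y) (hu : Summable u) (hca : ∀ n, |c n * a n| ≤ u n)
    {y₀ : ℝ} (h₀ : Summable fun n ↦ c n * cos (φ n y₀) + d n) (y : ℝ) :
    HasDerivAt (fun y ↦ ∑' n, (c n * cos (φ n y) + d n)) (∑' n, -(c n * a n * sin (φ n y))) y := by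
  have hterm (n : ℕ) (y : ℝ) : HasDerivAt (fun y ↦ c n * cos (φ n y) + d n)
      (-(c n * a n * sin (φ n y))) y :=
    ((((hasDerivAt_cos _).comp y (hφ n y)).const_mul (c n)).add_const (d n)).congr_deriv (by ring)
  refine hasDerivAt_tsum hu hterm (fun n y ↦ ?_) h₀ y
  rw [norm_neg, norm_mul, Real.norm_eq_abs, Real.norm_eq_abs]
  exact (mul_le_of_le_one_right (abs_nonneg _) (abs_sin_le_one _)).trans (hca n)

lemma ofReal_lt_ediam_image_of_update {ι E : Type*} [Fintype ι] [DecidableEq ι]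
    [PseudoMetricSpace E] {g : (ι → ℝ) × E → ι → ℝ} {A : Set ((ι → ℝ) × E)} {x : (ι → ℝ) × E}
    {ρ : ℝ} (hA : Metric.ball x ρ ⊆ A) {R : ℝ} (hR : 0 ≤ R) {j : ι} {c : ℝ} {F : ℝ → ℝ}
    (hF : ∀ y, g (Function.update x.1 j y, x.2) j = c - F y)
    (h : ∃ ya yb, |ya - x.1 j| < ρ ∧ |yb - x.1 j| < ρ ∧ R < F yb - F ya) :
    ENNReal.ofReal R < Metric.ediam (g '' A) := by
  obtain ⟨ya, yb, hya, hyb, hlt⟩ := h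
  have hmem (y : ℝ) (hy : |y - x.1 j| < ρ) : (Function.update x.1 j y, x.2) ∈ A := hA <| by
    rw [Metric.mem_ball, Prod.dist_eq, dist_self, max_eq_left dist_nonneg,
      dist_pi_lt_iff ((abs_nonneg _).trans_lt hy)]
    intro i
    rcases eq_or_ne i j with rfl | hij
    · simpa [Real.dist_eq] using hy
    · simpa [hij] using (abs_nonneg _).trans_lt hy
  have hdist : R < dist (g (Function.update x.1 j ya, x.2)) (g (Function.update x.1 j yb, x.2)) :=
    calc R < |F yb - F ya| := hlt.trans_le (le_abs_self _)
      _ = dist (g (Function.update x.1 j ya, x.2) j) (g (Function.update x.1 j yb, x.2) j) := by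
        rw [Real.dist_eq, hF, hF]; congr 1; ring
      _ ≤ _ := dist_le_pi_dist _ _ j
  calc ENNReal.ofReal R < ENNReal.ofReal (dist _ _) :=
        (ENNReal.ofReal_lt_ofReal_iff (hR.trans_lt hdist)).2 hdist
    _ = edist _ _ := (edist_dist _ _).symm
    _ ≤ _ := Metric.edist_le_ediam_of_mem (mem_image_of_mem g (hmem ya hya))
        (mem_image_of_mem g (hmem yb hyb))

section ContinuedFraction

variable {v : ℝ}

lemma Irrational.not_terminatedAt (hv : Irrational v) (n : ℕ) :
    ¬(GenContFract.of v).TerminatedAt n := fun h ↦ by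
  obtain ⟨q, rfl⟩ := GenContFract.exists_rat_eq_of_terminates ⟨n, h⟩
  exact hv ⟨q, rfl⟩

lemma fib_succ_le_cfq (hv : Irrational v) (n : ℕ) : (Nat.fib (n + 1) : ℝ) ≤ cfq v n :=
  GenContFract.succ_nth_fib_le_of_nth_den <| by
    cases n with
    | zero => exact .inl rfl
    | succ m => exact .inr (hv.not_terminatedAt m)

lemma natCast_le_cfq (hv : Irrational v) (n : ℕ) : (n : ℝ) ≤ cfq v n :=
  le_trans (by exact_mod_cast (by have := Nat.le_fib_add_one (n + 1); omega)) (fib_succ_le_cfq hv n)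

lemma one_le_cfq (hv : Irrational v) (n : ℕ) : 1 ≤ cfq v n :=
  le_trans (by exact_mod_cast Nat.fib_pos.2 n.succ_pos) (fib_succ_le_cfq hv n)

lemma cfq_pos (hv : Irrational v) (n : ℕ) : 0 < cfq v n :=
  one_pos.trans_le (one_le_cfq hv n)

lemma cfq_nonneg (v : ℝ) (n : ℕ) : 0 ≤ cfq v n := GenContFract.zero_le_of_den

lemma monotone_cfq : Monotone (cfq v) :=
  monotone_nat_of_le_succ fun _ ↦ GenContFract.of_den_mono

lemma cfq_add_cfq_succ_le (hv : Irrational v) (n : ℕ) :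
    cfq v n + cfq v (n + 1) ≤ cfq v (n + 2) := by
  obtain ⟨gp, hgp⟩ : ∃ gp, (GenContFract.of v).s.get? (n + 1) = some gp :=
    Option.ne_none_iff_exists'.1 (hv.not_terminatedAt (n + 1))
  have hb : 1 ≤ gp.b := GenContFract.of_one_le_get?_partDen (GenContFract.partDen_eq_s_b hgp)
  have hrec : cfq v (n + 2) = gp.b * cfq v (n + 1) + cfq v n := by
    simp only [cfq, GenContFract.dens_recurrence hgp rfl rfl,
      GenContFract.of_partNum_eq_one (GenContFract.partNum_eq_s_a hgp), one_mul]
  nlinarith [cfq_pos hv (n + 1)]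

def cfErr (v : ℝ) (n : ℕ) : ℝ := cfq v n * v - cfp v n

lemma abs_cfErr_le (hv : Irrational v) (n : ℕ) : |cfErr v n| ≤ (cfq v (n + 1))⁻¹ := by
  have h := GenContFract.abs_sub_convs_le (hv.not_terminatedAt n)
  rw [GenContFract.conv_eq_num_div_den] at h
  have hq := cfq_pos hv n
  calc |cfErr v n| = |cfq v n * (v - cfp v n / cfq v n)| := by
        rw [cfErr, mul_sub, mul_div_cancel₀ _ hq.ne']
    _ = cfq v n * |v - cfp v n / cfq v n| := by rw [abs_mul, abs_of_pos hq]
    _ ≤ cfq v n * (1 / (cfq v n * cfq v (n + 1))) := by gcongr; exact h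
    _ = (cfq v (n + 1))⁻¹ := by field_simp

lemma inv_two_mul_cfq_le_abs_cfErr (hv : Irrational v) (n : ℕ) :
    (2 * cfq v (n + 1))⁻¹ ≤ |cfErr v n| := by
  have hdet : cfp v n * cfq v (n + 1) - cfq v n * cfp v (n + 1) = (-1) ^ (n + 1) :=
    SimpContFract.determinant (s := SimpContFract.of v) (hv.not_terminatedAt n)
  have hone : |cfq v (n + 1) * cfErr v n - cfq v n * cfErr v (n + 1)| = 1 := by
    rw [show cfq v (n + 1) * cfErr v n - cfq v n * cfErr v (n + 1) = -(-1) ^ (n + 1) by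
      rw [← hdet, cfErr, cfErr]; ring]
    simp
  have hnext : cfq v n * |cfErr v (n + 1)| ≤ 1 / 2 := by
    have hq := cfq_pos hv (n + 2)
    have h2q : 2 * cfq v n ≤ cfq v (n + 2) := by
      linarith [cfq_add_cfq_succ_le hv n, monotone_cfq (v := v) n.le_succ]
    calc cfq v n * |cfErr v (n + 1)| ≤ cfq v n * (cfq v (n + 2))⁻¹ :=
          mul_le_mul_of_nonneg_left (abs_cfErr_le hv (n + 1)) (cfq_pos hv n).le
      _ ≤ 1 / 2 := by rw [mul_inv_le_iff₀ hq]; linarith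
  have htri := hone ▸ abs_sub (cfq v (n + 1) * cfErr v n) (cfq v n * cfErr v (n + 1))
  rw [abs_mul, abs_mul, abs_of_pos (cfq_pos hv _), abs_of_pos (cfq_pos hv _)] at htri
  rw [inv_le_iff_one_le_mul₀ (by linarith [cfq_pos hv (n + 1)])]
  linarith

lemma cfErr_ne_zero (hv : Irrational v) (n : ℕ) : cfErr v n ≠ 0 := by
  have := (inv_pos.2 (mul_pos two_pos (cfq_pos hv (n + 1)))).trans_le
    (inv_two_mul_cfq_le_abs_cfErr hv n)
  exact abs_pos.1 this

lemma cfq_sq_mul_exp_neg_le (hv : Irrational v) (n : ℕ) :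
    cfq v n ^ 2 * exp (-cfq v n) ≤ 8 * (2 / 3) ^ n := by
  have hq := cfq_pos hv n
  calc cfq v n ^ 2 * exp (-cfq v n) ≤ 8 * exp (cfq v n / 2) * exp (-cfq v n) := by
        gcongr; exact sq_le_eight_mul_exp_half hq.le
    _ = 8 * exp (-cfq v n / 2) := by rw [mul_assoc, ← exp_add]; ring_nf
    _ ≤ 8 * (2 / 3) ^ n := by gcongr; exact exp_neg_half_le_pow (natCast_le_cfq hv n)

lemma summable_cfq_succ_mul_exp_neg (hv : Irrational v) :
    Summable fun n ↦ cfq v (n + 1) * exp (-cfq v (n + 1)) := by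
  refine (summable_nat_add_iff (f := fun n ↦ cfq v n * exp (-cfq v n)) 1).2 <|
    Summable.of_nonneg_of_le
    (fun n ↦ mul_nonneg (cfq_pos hv n).le (exp_pos _).le) (fun n ↦ ?_)
    ((summable_geometric_of_lt_one (r := 2 / 3) (by norm_num) (by norm_num)).mul_left 8)
  calc cfq v n * exp (-cfq v n) ≤ cfq v n ^ 2 * exp (-cfq v n) := by
        gcongr; nlinarith [one_le_cfq hv n]
    _ ≤ 8 * (2 / 3) ^ n := cfq_sq_mul_exp_neg_le hv n

end ContinuedFraction

section HamiltonianFlow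

variable {ω : Fin 3 → ℝ} {h : (Fin 3 → ℝ) → ℝ} {Φ : ℝ → PS3 → PS3}

lemma IsHamFlow.fst_apply (hΦ : IsHamFlow (fun x : PS3 ↦ (∑ j, x.2 j * ω j) + h x.1) Φ)
    (x : PS3) (t : ℝ) : (Φ t x).1 = x.1 + t • ω := by
  funext j
  have hθ (s : ℝ) : HasDerivAt (fun s ↦ (Φ s x).1 j) (ω j) s := by
    have := hΦ.2.1 x s j
    dsimp only at this
    rwa [((hasDerivAt_sum_update_mul _ ω j _).add_const _).deriv] at this
  have := sub_eq_sub_of_hasDerivAt hθ (fun s ↦ hasDerivAt_mul_const (ω j)) t 0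
  simp only [hΦ.1 x, zero_mul, sub_zero] at this
  simp only [Pi.add_apply, Pi.smul_apply, smul_eq_mul]
  linarith

lemma IsHamFlow.snd_apply (hΦ : IsHamFlow (fun x : PS3 ↦ (∑ j, x.2 j * ω j) + h x.1) Φ)
    (x : PS3) (j : Fin 3) {G : ℝ → ℝ}
    (hG : ∀ s, HasDerivAt G (deriv (fun y ↦ h (Function.update (x.1 + s • ω) j y))
      ((x.1 + s • ω) j)) s) (t : ℝ) :
    (Φ t x).2 j = x.2 j - (G t - G 0) := by
  have hr (s : ℝ) : HasDerivAt (fun s ↦ (Φ s x).2 j)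
      (-deriv (fun y ↦ h (Function.update (x.1 + s • ω) j y)) ((x.1 + s • ω) j)) s := by
    have := hΦ.2.2 x s j
    rw [hΦ.fst_apply x s] at this
    simpa only [deriv_const_add] using this
  have := sub_eq_sub_of_hasDerivAt hr (fun s ↦ (hG s).neg) t 0
  simp only [hΦ.1 x, Pi.neg_apply] at this
  linarith

end HamiltonianFlow

section Drift

variable {v : ℝ}

def cfPhase (v : ℝ) (n : ℕ) (y z : ℝ) : ℝ := 2 * π * (cfq v n * y - cfp v n * z)

def cfSeries (v y z : ℝ) : ℝ := ∑' n : ℕ, exp (-cfq v (n + 1)) * cos (cfPhase v (n + 1) y z)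

def cfSinSeries (v y z : ℝ) : ℝ :=
  ∑' n : ℕ, 2 * π * cfq v (n + 1) * exp (-cfq v (n + 1)) * sin (cfPhase v (n + 1) y z)

lemma hY_eq (α α' : ℝ) (θ : Fin 3 → ℝ) :
    hY α α' θ = -cfSeries α (θ 0) (θ 2) - cfSeries α' (θ 1) (θ 2) := rfl

lemma hasDerivAt_cfSeries (hv : Irrational v) (y z : ℝ) :
    HasDerivAt (fun y ↦ cfSeries v y z) (-cfSinSeries v y z) y := by
  have hφ (n : ℕ) (y : ℝ) : HasDerivAt (fun y ↦ cfPhase v (n + 1) y z) (2 * π * cfq v (n + 1)) y :=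
    ((((hasDerivAt_id y).const_mul _).sub_const _).const_mul (2 * π)).congr_deriv (by ring)
  have h₀ : Summable fun n ↦ exp (-cfq v (n + 1)) * cos (cfPhase v (n + 1) y z) + 0 := by
    refine (summable_cfq_succ_mul_exp_neg hv).of_norm_bounded fun n ↦ ?_
    rw [add_zero, norm_mul, Real.norm_of_nonneg (exp_pos _).le, mul_comm, Real.norm_eq_abs]
    exact mul_le_mul_of_nonneg_right ((abs_cos_le_one _).trans (one_le_cfq hv _)) (exp_pos _).le
  convert hasDerivAt_tsum_mul_cos_add hφ ((summable_cfq_succ_mul_exp_neg hv).mul_left (2 * π))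
    (fun n ↦ le_of_eq ?_) h₀ y using 1
  · simp only [add_zero, cfSeries]
  · rw [cfSinSeries, ← tsum_neg]; congr 1; ext n; ring
  · rw [abs_of_pos (by have := cfq_pos hv (n + 1); positivity)]; ring

/-- The primitive in `t`, vanishing at `0`, of the `n`-th term of
`cfSinSeries v (y + t v) (z + t)`. -/
def driftTerm (v : ℝ) (n : ℕ) (y z t : ℝ) : ℝ :=
  cfq v n * exp (-cfq v n) / cfErr v n *
    (cos (cfPhase v n y z) - cos (cfPhase v n y z + 2 * π * cfErr v n * t))

def drift (v y z t : ℝ) : ℝ := ∑' n : ℕ, driftTerm v (n + 1) y z t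

lemma cfPhase_add_mul (v : ℝ) (n : ℕ) (y z t : ℝ) :
    cfPhase v n (y + t * v) (z + t) = cfPhase v n y z + 2 * π * cfErr v n * t := by
  simp only [cfPhase, cfErr]; ring

lemma drift_zero (v y z : ℝ) : drift v y z 0 = 0 := by simp [drift, driftTerm]

lemma hasDerivAt_drift (hv : Irrational v) (y z t : ℝ) :
    HasDerivAt (drift v y z) (cfSinSeries v (y + t * v) (z + t)) t := by
  set κ : ℕ → ℝ := fun n ↦ cfq v (n + 1) * exp (-cfq v (n + 1)) / cfErr v (n + 1)
  set ψ : ℕ → ℝ → ℝ := fun n s ↦ cfPhase v (n + 1) y z + 2 * π * cfErr v (n + 1) * s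
  have hψ (n : ℕ) (s : ℝ) : HasDerivAt (ψ n) (2 * π * cfErr v (n + 1)) s :=
    (((hasDerivAt_id s).const_mul _).const_add _).congr_deriv (by ring)
  have hκ (n : ℕ) : κ n * cfErr v (n + 1) = cfq v (n + 1) * exp (-cfq v (n + 1)) := by
    simp only [κ]; field_simp [cfErr_ne_zero hv (n + 1)]
  convert hasDerivAt_tsum_mul_cos_add (c := fun n ↦ -κ n) (d := fun n ↦ κ n * cos (ψ n 0)) hψ
    ((summable_cfq_succ_mul_exp_neg hv).mul_left (2 * π)) (fun n ↦ le_of_eq ?_) (y₀ := 0) ?_ t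
    using 1
  · ext s; simp only [drift, driftTerm, κ, ψ]; congr 1; ext n; ring_nf
  · rw [cfSinSeries]; congr 1; ext n
    rw [cfPhase_add_mul]
    linear_combination (-(2 * π) * sin (ψ n t)) * hκ n
  · rw [neg_mul, abs_neg, mul_left_comm, hκ, abs_of_pos (by have := cfq_pos hv (n + 1); positivity)]
  · simp

def driftAmp (v : ℝ) (n : ℕ) (t : ℝ) : ℝ :=
  2 * cfq v n * exp (-cfq v n) * (sin (π * cfErr v n * t) / cfErr v n)

lemma driftTerm_eq (v : ℝ) (n : ℕ) (y z t : ℝ) :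
    driftTerm v n y z t = driftAmp v n t * sin (cfPhase v n y z + π * cfErr v n * t) := by
  set φ := cfPhase v n y z
  rw [driftTerm, driftAmp, cos_sub_cos, show (φ + (φ + 2 * π * cfErr v n * t)) / 2 =
    φ + π * cfErr v n * t by ring, show (φ - (φ + 2 * π * cfErr v n * t)) / 2 =
    -(π * cfErr v n * t) by ring, sin_neg]
  ring

lemma abs_driftAmp_le_mul (v : ℝ) (n : ℕ) (t : ℝ) :
    |driftAmp v n t| ≤ 2 * π * cfq v n * exp (-cfq v n) * |t| := by
  have hq := cfq_nonneg v n
  rw [driftAmp, abs_mul, abs_of_nonneg (by positivity)]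
  calc 2 * cfq v n * exp (-cfq v n) * |sin (π * cfErr v n * t) / cfErr v n|
      ≤ 2 * cfq v n * exp (-cfq v n) * (π * |t|) := by gcongr; exact abs_sin_mul_div_le _ _
    _ = _ := by ring

lemma summable_driftTerm (hv : Irrational v) (y z t : ℝ) :
    Summable fun n ↦ driftTerm v (n + 1) y z t := by
  refine ((summable_cfq_succ_mul_exp_neg hv).mul_left (2 * π * |t|)).of_norm_bounded fun n ↦ ?_
  rw [Real.norm_eq_abs, driftTerm_eq, abs_mul]
  calc |driftAmp v (n + 1) t| * |sin _| ≤ |driftAmp v (n + 1) t| * 1 := by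
        gcongr; exact abs_sin_le_one _
    _ ≤ _ := by rw [mul_one]; exact (abs_driftAmp_le_mul v _ t).trans_eq (by ring)

lemma abs_driftAmp_le (hv : Irrational v) (n : ℕ) (t : ℝ) :
    |driftAmp v n t| ≤ 4 * cfq v n * exp (-cfq v n) * cfq v (n + 1) := by
  have hq := cfq_nonneg v n
  have hε := abs_pos.2 (cfErr_ne_zero hv n)
  have hinv : |cfErr v n|⁻¹ ≤ 2 * cfq v (n + 1) :=
    inv_le_of_inv_le₀ (by linarith [cfq_pos hv (n + 1)]) (inv_two_mul_cfq_le_abs_cfErr hv n)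
  rw [driftAmp, abs_mul, abs_of_nonneg (by positivity), abs_div]
  calc 2 * cfq v n * exp (-cfq v n) * (|sin (π * cfErr v n * t)| / |cfErr v n|)
      ≤ 2 * cfq v n * exp (-cfq v n) * (1 * (2 * cfq v (n + 1))) := by
        rw [div_eq_mul_inv]; gcongr; exact abs_sin_le_one _
    _ = _ := by ring

lemma four_mul_le_driftAmp (hv : Irrational v) (n : ℕ) {t : ℝ} (ht₀ : 0 ≤ t)
    (ht : t ≤ cfq v (n + 1) / 2) : 4 * cfq v n * exp (-cfq v n) * t ≤ driftAmp v n t := by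
  have hq := cfq_nonneg v n
  have hεt : |cfErr v n| * t ≤ 1 / 2 :=
    calc |cfErr v n| * t ≤ (cfq v (n + 1))⁻¹ * (cfq v (n + 1) / 2) :=
          mul_le_mul (abs_cfErr_le hv n) ht ht₀ (inv_nonneg.2 (cfq_nonneg v _))
      _ = 1 / 2 := by field_simp [(cfq_pos hv (n + 1)).ne']
  calc 4 * cfq v n * exp (-cfq v n) * t = 2 * cfq v n * exp (-cfq v n) * (2 * t) := by ring
    _ ≤ driftAmp v n t := by
      rw [driftAmp]; gcongr; exact two_mul_le_sin_mul_div (cfErr_ne_zero hv n) ht₀ hεt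

lemma abs_driftTerm_sub_le (v : ℝ) (n : ℕ) (y₁ y₂ z : ℝ) {t : ℝ} (ht : |t| ≤ cfq v n) :
    |driftTerm v n y₁ z t - driftTerm v n y₂ z t| ≤ 4 * π * cfq v n ^ 2 * exp (-cfq v n) := by
  have hq := cfq_nonneg v n
  have hsin (a b : ℝ) : |sin a - sin b| ≤ 2 :=
    (abs_sub _ _).trans (by linarith [abs_sin_le_one a, abs_sin_le_one b])
  rw [driftTerm_eq, driftTerm_eq, ← mul_sub, abs_mul]
  calc |driftAmp v n t| * |sin (cfPhase v n y₁ z + π * cfErr v n * t) -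
        sin (cfPhase v n y₂ z + π * cfErr v n * t)|
      ≤ (2 * π * cfq v n * exp (-cfq v n) * cfq v n) * 2 :=
        mul_le_mul ((abs_driftAmp_le_mul v n t).trans (by gcongr)) (hsin _ _) (abs_nonneg _)
          (by positivity)
    _ = _ := by ring

lemma abs_driftTerm_add_sub_le (hv : Irrational v) {n K : ℕ} (hnK : n + 1 ≤ K) (y z t : ℝ) :
    |driftTerm v n (y + (2 * cfq v K)⁻¹) z t - driftTerm v n y z t| ≤
      4 * π * cfq v n ^ 2 * exp (-cfq v n) := by
  have hq := cfq_nonneg v n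
  have hK := cfq_pos hv K
  have hphase : cfPhase v n (y + (2 * cfq v K)⁻¹) z + π * cfErr v n * t -
      (cfPhase v n y z + π * cfErr v n * t) = π * cfq v n / cfq v K := by
    simp only [cfPhase]; field_simp; ring
  rw [driftTerm_eq, driftTerm_eq, ← mul_sub, abs_mul]
  calc |driftAmp v n t| * |sin (cfPhase v n (y + (2 * cfq v K)⁻¹) z + π * cfErr v n * t) -
        sin (cfPhase v n y z + π * cfErr v n * t)|
      ≤ 4 * cfq v n * exp (-cfq v n) * cfq v (n + 1) * (π * cfq v n / cfq v K) :=
        mul_le_mul (abs_driftAmp_le hv n t)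
          ((abs_sin_sub_sin_le _ _).trans (by rw [hphase, abs_of_nonneg (by positivity)]))
          (abs_nonneg _) (by have := cfq_nonneg v (n + 1); positivity)
    _ = 4 * π * cfq v n ^ 2 * exp (-cfq v n) * (cfq v (n + 1) / cfq v K) := by ring
    _ ≤ 4 * π * cfq v n ^ 2 * exp (-cfq v n) := by
        refine mul_le_of_le_one_right (by positivity) ?_
        rw [div_le_one hK]
        exact monotone_cfq hnK

lemma driftTerm_add_sub_eq (hv : Irrational v) (n : ℕ) {y z t : ℝ}
    (hy : sin (cfPhase v n y z + π * cfErr v n * t) = -1) :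
    driftTerm v n (y + (2 * cfq v n)⁻¹) z t - driftTerm v n y z t = 2 * driftAmp v n t := by
  have hshift : cfPhase v n (y + (2 * cfq v n)⁻¹) z + π * cfErr v n * t =
      cfPhase v n y z + π * cfErr v n * t + π := by
    simp only [cfPhase]; field_simp [(cfq_pos hv n).ne']; ring
  rw [driftTerm_eq, driftTerm_eq, hshift, sin_add_pi, hy]
  ring

lemma exists_drift_sub_ge (hv : Irrational v) {K : ℕ} (hK : 1 ≤ K) (z y₀ : ℝ) {t : ℝ}
    (ht₀ : 0 ≤ t) (ht : t ≤ cfq v (K + 1) / 2) :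
    ∃ ya yb, |ya - y₀| ≤ (cfq v K)⁻¹ ∧ |yb - y₀| ≤ (cfq v K)⁻¹ ∧
      8 * cfq v K * exp (-cfq v K) * t - 96 * π ≤ drift v yb z t - drift v ya z t := by
  obtain ⟨L, rfl⟩ : ∃ L, K = L + 1 := ⟨K - 1, by omega⟩
  have hq := cfq_pos hv (L + 1)
  obtain ⟨ya, hya, hsin⟩ := exists_abs_sub_le_sin_eq_one hq
    (π * cfErr v (L + 1) * t - 2 * π * cfp v (L + 1) * z + π) y₀
  have hya' : sin (cfPhase v (L + 1) ya z + π * cfErr v (L + 1) * t) = -1 := by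
    rw [← hsin, ← sin_sub_pi]; congr 1; simp only [cfPhase]; ring
  have hmain := driftTerm_add_sub_eq hv (L + 1) hya'
  set δ := (2 * cfq v (L + 1))⁻¹
  have hδ : 0 < δ := inv_pos.2 (by positivity)
  have hδδ : δ + δ = (cfq v (L + 1))⁻¹ := by simp only [δ]; field_simp; ring
  refine ⟨ya, ya + δ, by linarith, ?_, ?_⟩
  · calc |ya + δ - y₀| = |(ya - y₀) + δ| := by ring_nf
      _ ≤ |ya - y₀| + δ := (abs_add_le _ _).trans_eq (by rw [abs_of_pos hδ])
      _ ≤ _ := by linarith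
  set f := fun n ↦ driftTerm v (n + 1) (ya + δ) z t - driftTerm v (n + 1) ya z t
  have hdrift : drift v (ya + δ) z t - drift v ya z t = ∑' n, f n :=
    ((summable_driftTerm hv _ z t).tsum_sub (summable_driftTerm hv _ z t)).symm
  replace hmain : 8 * cfq v (L + 1) * exp (-cfq v (L + 1)) * t ≤ f L := by
    simp only [f, hmain]
    linarith [four_mul_le_driftAmp hv (L + 1) ht₀ ht]
  have hbound (n : ℕ) : 4 * π * cfq v (n + 1) ^ 2 * exp (-cfq v (n + 1)) ≤ 32 * π * (2 / 3) ^ n :=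
    calc 4 * π * cfq v (n + 1) ^ 2 * exp (-cfq v (n + 1))
        ≤ 4 * π * (8 * (2 / 3) ^ (n + 1)) := by
          rw [mul_assoc]
          exact mul_le_mul_of_nonneg_left (cfq_sq_mul_exp_neg_le hv (n + 1)) (by positivity)
      _ ≤ 32 * π * (2 / 3) ^ n := by
          rw [pow_succ]; nlinarith [pi_pos, pow_pos (by norm_num : (0 : ℝ) < 2 / 3) n]
  -- A shift by `δ` barely moves the terms of lower frequency, and `t ≤ q_n` bounds those of higher.
  have hrest : |∑' n, f n - f L| ≤ ∑' n : ℕ, 32 * π * (2 / 3) ^ n := by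
    refine abs_tsum_sub_le L ((summable_geometric_of_lt_one (by norm_num) (by norm_num)).mul_left _)
      (by positivity) fun n hn ↦ (?_ : _ ≤ _).trans (hbound n)
    rcases Nat.lt_or_gt_of_ne hn with hlt | hgt
    · exact abs_driftTerm_add_sub_le hv (by omega) ya z t
    · refine abs_driftTerm_sub_le v (n + 1) _ _ z ?_
      rw [abs_of_nonneg ht₀]
      linarith [monotone_cfq (v := v) (show L + 1 + 1 ≤ n + 1 by omega), cfq_pos hv (L + 2)]
  rw [tsum_mul_left, tsum_geometric_of_lt_one (by norm_num) (by norm_num)] at hrest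
  rw [hdrift]
  linarith [(abs_le.1 hrest).1]

lemma exists_drift_sub_gt (hv : Irrational v) {K : ℕ} {ρ R t : ℝ} (hρ : 0 < ρ)
    (hKρ : ρ⁻¹ < K) (hKR : R + 96 * π < K) (ht₁ : 2 * exp (cfq v K) ≤ t)
    (ht₂ : t ≤ cfq v (K + 1) / 2) (z y₀ : ℝ) :
    ∃ ya yb, |ya - y₀| < ρ ∧ |yb - y₀| < ρ ∧ R < drift v yb z t - drift v ya z t := by
  have hK : 1 ≤ K := by
    have : (0 : ℝ) < K := (inv_pos.2 hρ).trans hKρ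
    exact_mod_cast this
  have hqK := natCast_le_cfq hv K
  have hq := cfq_pos hv K
  obtain ⟨ya, yb, hya, hyb, hdiff⟩ :=
    exists_drift_sub_ge hv hK z y₀ ((by positivity : (0 : ℝ) ≤ 2 * exp _).trans ht₁) ht₂
  have hqρ : (cfq v K)⁻¹ < ρ := inv_lt_of_inv_lt₀ hρ (hKρ.trans_le hqK)
  refine ⟨ya, yb, hya.trans_lt hqρ, hyb.trans_lt hqρ, ?_⟩
  have : 16 * cfq v K ≤ 8 * cfq v K * exp (-cfq v K) * t :=
    calc 16 * cfq v K = 8 * cfq v K * exp (-cfq v K) * (2 * exp (cfq v K)) := by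
          rw [exp_neg]; field_simp; ring
      _ ≤ _ := by gcongr
  linarith

end Drift

section YoccozFlow

variable {α α' : ℝ} {Φ : ℝ → PS3 → PS3}

lemma hasDerivAt_hY_update_zero (hα : Irrational α) (α' : ℝ) (θ : Fin 3 → ℝ) :
    HasDerivAt (fun y ↦ hY α α' (Function.update θ 0 y)) (cfSinSeries α (θ 0) (θ 2)) (θ 0) := by
  have : (fun y ↦ hY α α' (Function.update θ 0 y)) =
      fun y ↦ -cfSeries α y (θ 2) - cfSeries α' (θ 1) (θ 2) := by
    ext y; simp [hY_eq]
  rw [this]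
  simpa using (hasDerivAt_cfSeries hα (θ 0) (θ 2)).neg.sub_const (cfSeries α' (θ 1) (θ 2))

lemma hasDerivAt_hY_update_one (α : ℝ) (hα' : Irrational α') (θ : Fin 3 → ℝ) :
    HasDerivAt (fun y ↦ hY α α' (Function.update θ 1 y)) (cfSinSeries α' (θ 1) (θ 2)) (θ 1) := by
  have : (fun y ↦ hY α α' (Function.update θ 1 y)) =
      fun y ↦ -cfSeries α (θ 0) (θ 2) - cfSeries α' y (θ 2) := by
    ext y; simp [hY_eq]
  rw [this]
  simpa using (hasDerivAt_cfSeries hα' (θ 1) (θ 2)).const_sub (-cfSeries α (θ 0) (θ 2))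

lemma snd_zero_eq_sub_drift (hα : Irrational α)
    (hΦ : IsHamFlow (fun x : PS3 ↦ (∑ j, x.2 j * (![α, α', 1] : Fin 3 → ℝ) j) + hY α α' x.1) Φ)
    (x : PS3) (t : ℝ) :
    (Φ t x).2 0 = x.2 0 - drift α (x.1 0) (x.1 2) t := by
  have := hΦ.snd_apply x 0 (G := drift α (x.1 0) (x.1 2)) (fun s ↦ ?_) t
  · rwa [drift_zero, sub_zero] at this
  rw [(hasDerivAt_hY_update_zero hα α' _).deriv]
  simpa using hasDerivAt_drift hα (x.1 0) (x.1 2) s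

lemma snd_one_eq_sub_drift (hα' : Irrational α')
    (hΦ : IsHamFlow (fun x : PS3 ↦ (∑ j, x.2 j * (![α, α', 1] : Fin 3 → ℝ) j) + hY α α' x.1) Φ)
    (x : PS3) (t : ℝ) :
    (Φ t x).2 1 = x.2 1 - drift α' (x.1 1) (x.1 2) t := by
  have := hΦ.snd_apply x 1 (G := drift α' (x.1 1) (x.1 2)) (fun s ↦ ?_) t
  · rwa [drift_zero, sub_zero] at this
  rw [(hasDerivAt_hY_update_one α hα' _).deriv]
  simpa using hasDerivAt_drift hα' (x.1 1) (x.1 2) s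

end YoccozFlow

theorem diffusion_at_all_times_Yoccoz (α α' : ℝ) (hY' : MemY α α')
    (Φ : ℝ → PS3 → PS3)
    (hΦ : IsHamFlow
      (fun x : PS3 => (∑ j, x.2 j * (![α, α', 1] : Fin 3 → ℝ) j) + hY α α' x.1) Φ) :
    DiffusesAtAllTimes Φ := by
  obtain ⟨hα, hα', hgrowth⟩ := hY'
  intro A hA ⟨x, hx⟩ _ R hR
  obtain ⟨ρ, hρ, hball⟩ := Metric.isOpen_iff.1 hA x hx
  obtain ⟨N, hN⟩ := exists_nat_gt (ρ⁻¹ + R + 96 * π)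
  have hNρ : ρ⁻¹ < N := by linarith [pi_pos]
  have hNR : R + 96 * π < N := by linarith [inv_pos.2 hρ]
  have hu : Filter.Tendsto (fun n ↦ 2 * exp (cfq α n)) Filter.atTop Filter.atTop :=
    Filter.tendsto_atTop_mono (fun n ↦ by linarith [natCast_le_cfq hα n, add_one_le_exp (cfq α n)])
      tendsto_natCast_atTop_atTop
  refine ⟨2 * exp (cfq α N), fun t ht ↦ ?_⟩
  obtain ⟨M, hNM, hMt, htM⟩ := exists_le_lt_succ_of_tendsto hu ht
  have hMρ : ρ⁻¹ < M := hNρ.trans_le (by exact_mod_cast hNM)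
  have hMR : R + 96 * π < M := hNR.trans_le (by exact_mod_cast hNM)
  have hM : 1 ≤ M := by exact_mod_cast (inv_pos.2 hρ).trans hMρ
  rcases le_or_gt t (cfq α (M + 1) / 2) with hsmall | hlarge
  · exact ofReal_lt_ediam_image_of_update hball hR
      (fun y ↦ by simpa using snd_zero_eq_sub_drift hα hΦ (Function.update x.1 0 y, x.2) t)
      (exists_drift_sub_gt hα hρ hMρ hMR hMt hsmall (x.1 2) (x.1 0))
  · have ht₁ : 2 * exp (cfq α' M) ≤ t := by linarith [(hgrowth M hM).2]
    have ht₂ : t ≤ cfq α' (M + 1) / 2 := by linarith [(hgrowth (M + 1) (by omega)).1]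
    exact ofReal_lt_ediam_image_of_update hball hR
      (fun y ↦ by simpa using snd_one_eq_sub_drift hα' hΦ (Function.update x.1 1 y, x.2) t)
      (exists_drift_sub_gt hα' hρ hMρ hMR ht₁ ht₂ (x.1 2) (x.1 1))
end
end

section
/- There exists a dense Gδ subset Ŝ of ℝ² consisting of pairs (α, α') for which there exist sequences of rational numbers (p_n/q_n)_{n≥1} and (p'_n/q'_n)_{n≥1} (with q_n, q'_n positive integers, q_n → ∞) such that for all n: q_n⁴ ≤ q'_n, |q_n α − p_n| ≤ e^{−2 q'_n}, and |q'_n α' − p'_n| ≤ e^{−q'_n}. -/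
/-!
Strict inequalities make each condition "there is an approximation with `q > n`" open, and the
level-`n` set contains every rational pair `(p / q, p' / q⁴)` with `q > n`, which it approximates
exactly; these pairs are dense, so the intersection over `n` is a dense `Gδ` by Baire's theorem.
-/

open Real Set Filter

lemma abs_sub_floor_mul_div_le {K : Type*} [Field K] [LinearOrder K] [IsStrictOrderedRing K]
    [FloorRing K] (a : K) {m : K} (hm : 0 < m) : |a - ⌊m * a⌋ / m| ≤ 1 / m := by
  have hfract : a - ⌊m * a⌋ / m = Int.fract (m * a) / m := by
    rw [Int.fract]; field_simp
  rw [hfract, abs_div, abs_of_pos hm, Int.abs_fract]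
  exact div_le_div_of_nonneg_right (Int.fract_lt_one _).le hm.le

def approximablePairs (n : ℕ) : Set (ℝ × ℝ) :=
  ⋃ (q : ℕ) (_ : n < q) (q' : ℕ) (_ : q ^ 4 ≤ q') (p : ℤ) (p' : ℤ),
    {x | |(q : ℝ) * x.1 - p| < exp (-(2 * (q' : ℝ)))} ∩ {x | |(q' : ℝ) * x.2 - p'| < exp (-(q' : ℝ))}

lemma isOpen_approximablePairs (n : ℕ) : IsOpen (approximablePairs n) :=
  isOpen_iUnion fun _ => isOpen_iUnion fun _ => isOpen_iUnion fun _ => isOpen_iUnion fun _ =>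
    isOpen_iUnion fun _ => isOpen_iUnion fun _ =>
      (isOpen_lt (by fun_prop) continuous_const).inter (isOpen_lt (by fun_prop) continuous_const)

lemma div_pow_four_mem_approximablePairs {n q : ℕ} (hq : n < q) (p p' : ℤ) :
    ((p : ℝ) / q, (p' : ℝ) / (q ^ 4 : ℕ)) ∈ approximablePairs n := by
  have hq0 : (q : ℝ) ≠ 0 := by exact_mod_cast (Nat.zero_le n).trans_lt hq |>.ne'
  simp only [approximablePairs, mem_iUnion]
  refine ⟨q, hq, q ^ 4, le_rfl, p, p', ?_, ?_⟩ <;>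
    simp [mul_div_cancel₀, hq0, exp_pos]

lemma dense_approximablePairs (n : ℕ) : Dense (approximablePairs n) := by
  refine Metric.dense_iff.2 fun x r hr => ?_
  obtain ⟨q, hq⟩ := exists_nat_gt (max (n : ℝ) (1 / r))
  have hqn : n < q := by exact_mod_cast (le_max_left _ _).trans_lt hq
  have hq0 : (0 : ℝ) < q := by exact_mod_cast (Nat.zero_le n).trans_lt hqn
  have hqr : 1 / (q : ℝ) < r := (one_div_lt hq0 hr).2 ((le_max_right _ _).trans_lt hq)
  have hq4 : 1 / ((q ^ 4 : ℕ) : ℝ) ≤ 1 / q :=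
    one_div_le_one_div_of_le hq0 (by exact_mod_cast Nat.le_self_pow four_ne_zero q)
  refine ⟨_, ?_, div_pow_four_mem_approximablePairs hqn ⌊q * x.1⌋ ⌊(q ^ 4 : ℕ) * x.2⌋⟩
  rw [Metric.mem_ball, Prod.dist_eq, dist_comm, dist_comm _ x.2, Real.dist_eq, Real.dist_eq]
  exact max_lt ((abs_sub_floor_mul_div_le x.1 hq0).trans_lt hqr)
    (((abs_sub_floor_mul_div_le x.2 (by push_cast; positivity)).trans hq4).trans_lt hqr)

theorem dense_Gdelta_good_pairs :
    ∃ S : Set (ℝ × ℝ), IsGδ S ∧ Dense S ∧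
      ∀ x ∈ S,
        ∃ (p p' : ℕ → ℤ) (q q' : ℕ → ℕ),
          (∀ n, 0 < q n) ∧ (∀ n, 0 < q' n) ∧
          Filter.Tendsto (fun n => (q n : ℝ)) Filter.atTop Filter.atTop ∧
          ∀ n : ℕ,
            (q n) ^ 4 ≤ q' n ∧
            |(q n : ℝ) * x.1 - (p n : ℝ)| ≤ Real.exp (-(2 * (q' n : ℝ))) ∧
            |(q' n : ℝ) * x.2 - (p' n : ℝ)| ≤ Real.exp (-(q' n : ℝ)) := by
  refine ⟨⋂ n, approximablePairs n, .iInter_of_isOpen isOpen_approximablePairs,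
    dense_iInter_of_isOpen isOpen_approximablePairs dense_approximablePairs, fun x hx => ?_⟩
  simp only [approximablePairs, mem_iInter, mem_iUnion, mem_inter_iff, mem_ofPred_eq] at hx
  choose q hnq q' hqq' p p' hp using hx
  have hq : ∀ n, 0 < q n := fun n => (Nat.zero_le n).trans_lt (hnq n)
  refine ⟨p, p', q, q', hq, fun n => (pow_pos (hq n) 4).trans_le (hqq' n), ?_,
    fun n => ⟨hqq' n, (hp n).1.le, (hp n).2.le⟩⟩
  exact tendsto_natCast_atTop_atTop.comp (tendsto_atTop_mono (fun n => (hnq n).le) tendsto_id)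
end
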